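/- arXiv:1409.1292 — 2 statements merged into one kernel-verified Lean document; each statement's English description precedes it below -/
import Mathlib

section
/- Correctness of the pattern-enumeration join: a tree pattern P = (P_1, ..., P_m) is nonempty (i.e., Trees(P) ≠ ∅) if and only if the intersection R = ⋂_{i=1}^m roots(w_i, P_i) is nonempty; moreover Trees(P) = ⋃_{r ∈ R} paths(w_1, P_1, r) × ... × paths(w_m, P_m, r), and this union is over pairwise disjoint sets. -/
open scoped Classical

/-- Correctness of the pattern-enumeration join.
For a tree pattern `P = (P_1, …, P_m)`: `Trees(P) ≠ ∅` iff
`R = ⋂ᵢ roots(w_i, P_i) ≠ ∅`; moreover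
`Trees(P) = ⋃_{r ∈ R} paths(w_1, P_1, r) × ⋯ × paths(w_m, P_m, r)`,
and the union is over pairwise disjoint sets.

Model: for each keyword index `i`, `A i : Finset Path` is the set of paths
with pattern `P_i` (of length ≤ d) reaching `w_i` (over all roots), and
`start p` is the root of path `p`. Then `roots(w_i, P_i) = (A i).image start`,
`paths(w_i, P_i, r) = (A i).filter (start · = r)`, and `Trees(P)` is the set
of `m`-tuples `t` with `t i ∈ A i` for all `i` sharing a common root. -/
theorem pattern_enumeration_join_correct
    {V Path : Type} [Fintype V] [Fintype Path] (m : ℕ)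
    (A : Fin m → Finset Path) (start : Path → V) :
    -- nonemptiness test via root intersection
    ((Finset.univ.filter fun t : Fin m → Path =>
        (∀ i, t i ∈ A i) ∧ ∃ r : V, ∀ i, start (t i) = r).Nonempty
      ↔ (Finset.univ.filter fun r : V => ∀ i, ∃ p ∈ A i, start p = r).Nonempty)
    -- Trees(P) as a union of per-root products
    ∧ (Finset.univ.filter fun t : Fin m → Path =>
          (∀ i, t i ∈ A i) ∧ ∃ r : V, ∀ i, start (t i) = r)
        = (Finset.univ.filter fun r : V =>
              ∀ i, ∃ p ∈ A i, start p = r).biUnion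
            (fun r => Fintype.piFinset fun i =>
              (A i).filter fun p => start p = r)
    -- the per-root products are pairwise disjoint (for m ≥ 1)
    ∧ (0 < m → ∀ r r' : V, r ≠ r' →
        Disjoint
          (Fintype.piFinset fun i => (A i).filter fun p => start p = r)
          (Fintype.piFinset fun i => (A i).filter fun p => start p = r')) := by
  have heq : (Finset.univ.filter fun t : Fin m → Path =>
          (∀ i, t i ∈ A i) ∧ ∃ r : V, ∀ i, start (t i) = r)
        = (Finset.univ.filter fun r : V =>
              ∀ i, ∃ p ∈ A i, start p = r).biUnion
            (fun r => Fintype.piFinset fun i =>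
              (A i).filter fun p => start p = r) := by
    ext t
    simp only [Finset.mem_filter, Finset.mem_univ, true_and, Finset.mem_biUnion,
      Fintype.mem_piFinset]
    constructor
    · rintro ⟨hA, r, hr⟩
      exact ⟨r, fun i => ⟨t i, hA i, hr i⟩, fun i => ⟨hA i, hr i⟩⟩
    · rintro ⟨r, _, h⟩
      exact ⟨fun i => (h i).1, r, fun i => (h i).2⟩
  refine ⟨?_, heq, ?_⟩
  · constructor
    · rintro ⟨t, ht⟩
      simp only [Finset.mem_filter, Finset.mem_univ, true_and] at ht
      obtain ⟨hA, r, hr⟩ := ht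
      refine ⟨r, ?_⟩
      simp only [Finset.mem_filter, Finset.mem_univ, true_and]
      exact fun i => ⟨t i, hA i, hr i⟩
    · rintro ⟨r, hr⟩
      simp only [Finset.mem_filter, Finset.mem_univ, true_and] at hr
      choose p hp hs using hr
      refine ⟨p, ?_⟩
      simp only [Finset.mem_filter, Finset.mem_univ, true_and]
      exact ⟨hp, r, hs⟩
  · intro hm r r' hne
    rw [Finset.disjoint_left]
    intro t ht ht'
    simp only [Fintype.mem_piFinset, Finset.mem_filter] at ht ht'
    obtain ⟨i⟩ := Fin.pos_iff_nonempty.mp hm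
    exact hne ((ht i).2 ▸ (ht' i).2)
end

section
/- Pairwise precision bound for sampled ranking: let P_1, P_2 be two tree patterns with exact scores S_1 = Σ_{r ∈ R} s_1(r) and S_2 = Σ_{r ∈ R} s_2(r) satisfying S_1 > S_2, where s_i(r) ∈ [0, M_r] for bounds M_r with Σ_r M_r ≤ S_1 + S_2. If each root r is independently sampled with probability ρ and Ŝ_i = Σ_{r sampled} s_i(r), then Pr[Ŝ_1 < Ŝ_2] ≤ exp( -2 ((S_1 - S_2)/(S_1 + S_2))² · ρ² ). -/
/-! The score difference `Ŝ₁ - Ŝ₂ = ∑ r, (s₁ r - s₂ r) X r` is a weighted sum of independent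
Bernoulli(ρ) indicators with mean `ρ (S₁ - S₂)`. By Hoeffding's lemma each summand, once centred,
is sub-Gaussian with parameter `(s₁ r - s₂ r)² / 4`, and since `|s₁ r - s₂ r| ≤ s₁ r + s₂ r` these
parameters add up to at most `(S₁ + S₂)² / 4`. The event `Ŝ₁ < Ŝ₂` is a deviation of at least
`ρ (S₁ - S₂)` below the mean, so Hoeffding's inequality bounds its probability. -/

open MeasureTheory ProbabilityTheory Finset Real NNReal

section

variable {Ω : Type*} [MeasurableSpace Ω] {μ : Measure Ω}

lemma ProbabilityTheory.HasSubgaussianMGF.mono {X : Ω → ℝ} {c c' : ℝ≥0}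
    (h : HasSubgaussianMGF X c μ) (hc : c ≤ c') : HasSubgaussianMGF X c' μ where
  integrable_exp_mul := h.integrable_exp_mul
  mgf_le t := (h.mgf_le t).trans (by gcongr)

lemma integral_eq_measureReal_of_forall_eq_zero_or_eq_one {X : Ω → ℝ} (hX : Measurable X)
    (h01 : ∀ ω, X ω = 0 ∨ X ω = 1) : μ[X] = μ.real {ω | X ω = 1} := by
  have hX_eq : X = {ω | X ω = 1}.indicator 1 := by
    ext ω
    rcases h01 ω with h | h <;> simp [Set.indicator, h]
  conv_lhs => rw [hX_eq]
  exact integral_indicator_one (hX (measurableSet_singleton 1))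

lemma measureReal_sum_mul_le_sub_le_exp [IsProbabilityMeasure μ] {ι : Type*}
    {X : ι → Ω → ℝ} (hindep : iIndepFun X μ) (hmeas : ∀ i, AEMeasurable (X i) μ)
    (hX : ∀ i, ∀ᵐ ω ∂μ, X i ω ∈ Set.Icc 0 1) (s : Finset ι) (w : ι → ℝ) {C ε : ℝ}
    (hC : ∑ i ∈ s, w i ^ 2 ≤ C) (hε : 0 ≤ ε) :
    μ.real {ω | ∑ i ∈ s, w i * X i ω ≤ ∑ i ∈ s, w i * μ[X i] - ε}
      ≤ exp (-2 * ε ^ 2 / C) := by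
  set Z : ι → Ω → ℝ := fun i ω ↦ -w i * (X i ω - μ[X i])
  have hZ_indep : iIndepFun Z μ :=
    hindep.comp (fun i x ↦ -w i * (x - ∫ ω, X i ω ∂μ)) fun i ↦ by fun_prop
  have hZ_subG (i : ι) (_ : i ∈ s) :
      HasSubgaussianMGF (Z i) (w i ^ 2 / 4).toNNReal μ := by
    refine ((hasSubgaussianMGF_of_mem_Icc (hmeas i) (hX i)).const_mul (-w i)).mono
      (le_of_eq (NNReal.eq ?_))
    change (-w i) ^ 2 * (((‖(1 : ℝ) - 0‖₊ / 2) ^ 2 : ℝ≥0) : ℝ) = _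
    rw [Real.coe_toNNReal _ (by positivity)]
    norm_num
    ring
  have hC_nonneg : 0 ≤ C := (sum_nonneg fun i _ ↦ sq_nonneg (w i)).trans hC
  have hsum_subG : HasSubgaussianMGF (fun ω ↦ ∑ i ∈ s, Z i ω) (C / 4).toNNReal μ := by
    refine (HasSubgaussianMGF.sum_of_iIndepFun hZ_indep hZ_subG).mono ?_
    rw [← Real.toNNReal_sum_of_nonneg fun i _ ↦ by positivity, ← sum_div]
    gcongr
  calc μ.real {ω | ∑ i ∈ s, w i * X i ω ≤ ∑ i ∈ s, w i * μ[X i] - ε}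
      ≤ μ.real {ω | ε ≤ ∑ i ∈ s, Z i ω} := by
        refine measureReal_mono (fun ω hω ↦ ?_)
        simp only [Set.mem_ofPred_eq, Z, neg_mul, sum_neg_distrib, mul_sub, sum_sub_distrib] at hω ⊢
        linarith
    _ ≤ exp (-ε ^ 2 / (2 * (C / 4).toNNReal)) := hsum_subG.measure_ge_le hε
    _ = exp (-2 * ε ^ 2 / C) := by rw [Real.coe_toNNReal _ (by positivity)]; ring_nf

end

lemma sum_sq_sub_le_sq_sum_add {ι : Type*} (s : Finset ι) {f g : ι → ℝ}
    (hf : ∀ i, 0 ≤ f i) (hg : ∀ i, 0 ≤ g i) :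
    ∑ i ∈ s, (f i - g i) ^ 2 ≤ (∑ i ∈ s, f i + ∑ i ∈ s, g i) ^ 2 :=
  calc ∑ i ∈ s, (f i - g i) ^ 2
      ≤ ∑ i ∈ s, (f i + g i) ^ 2 := sum_le_sum fun i _ ↦ by nlinarith [hf i, hg i]
    _ ≤ (∑ i ∈ s, (f i + g i)) ^ 2 :=
        sum_sq_le_sq_sum_of_nonneg fun i _ ↦ add_nonneg (hf i) (hg i)
    _ = (∑ i ∈ s, f i + ∑ i ∈ s, g i) ^ 2 := by rw [sum_add_distrib]

theorem sampled_ranking_pairwise_precision_general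
    {Ω ι : Type} [MeasurableSpace Ω] [Fintype ι]
    (μ : Measure Ω) [IsProbabilityMeasure μ]
    (ρ : ℝ) (hρ : ρ ∈ Set.Ioc (0 : ℝ) 1)
    (X : ι → Ω → ℝ)
    (hX01 : ∀ r ω, X r ω = 0 ∨ X r ω = 1)
    (hXmeas : ∀ r, Measurable (X r))
    (hindep : iIndepFun X μ)
    (hXprob : ∀ r, μ {ω | X r ω = 1} = ENNReal.ofReal ρ)
    (s₁ s₂ : ι → ℝ) (hs₁ : ∀ r, 0 ≤ s₁ r) (hs₂ : ∀ r, 0 ≤ s₂ r)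
    (hgt : (∑ r : ι, s₂ r) < ∑ r : ι, s₁ r) :
    (μ {ω | ∑ r : ι, X r ω * s₁ r < ∑ r : ι, X r ω * s₂ r}).toReal
      ≤ Real.exp (-2 *
          (((∑ r : ι, s₁ r) - ∑ r : ι, s₂ r) /
           ((∑ r : ι, s₁ r) + ∑ r : ι, s₂ r)) ^ 2 * ρ ^ 2) := by
  set w : ι → ℝ := fun r ↦ s₁ r - s₂ r
  have hmean (r : ι) : μ[X r] = ρ := by
    rw [integral_eq_measureReal_of_forall_eq_zero_or_eq_one (hXmeas r) (hX01 r), measureReal_def,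
      hXprob r, ENNReal.toReal_ofReal hρ.1.le]
  have hX_Icc (r : ι) : ∀ᵐ ω ∂μ, X r ω ∈ Set.Icc 0 1 :=
    ae_of_all _ fun ω ↦ by rcases hX01 r ω with h | h <;> simp [h]
  have hsub : {ω | ∑ r, X r ω * s₁ r < ∑ r, X r ω * s₂ r}
      ⊆ {ω | ∑ r, w r * X r ω ≤ ∑ r, w r * μ[X r] - ρ * ∑ r, w r} := by
    intro ω hω
    simp only [Set.mem_ofPred_eq, hmean, ← sum_mul, w, sub_mul, sum_sub_distrib] at hω ⊢
    simp only [mul_comm (X _ ω)] at hω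
    linarith
  have hgap : 0 ≤ ρ * ∑ r, w r := by
    simp only [w, sum_sub_distrib]
    exact mul_nonneg hρ.1.le (sub_nonneg.2 hgt.le)
  calc (μ {ω | ∑ r, X r ω * s₁ r < ∑ r, X r ω * s₂ r}).toReal
      ≤ μ.real {ω | ∑ r, w r * X r ω ≤ ∑ r, w r * μ[X r] - ρ * ∑ r, w r} := measureReal_mono hsub
    _ ≤ exp (-2 * (ρ * ∑ r, w r) ^ 2 / (∑ r, s₁ r + ∑ r, s₂ r) ^ 2) :=
        measureReal_sum_mul_le_sub_le_exp hindep (fun r ↦ (hXmeas r).aemeasurable) hX_Icc _ w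
          (sum_sq_sub_le_sq_sum_add _ hs₁ hs₂) hgap
    _ = _ := by simp only [w, sum_sub_distrib, div_pow]; congr 1; ring

/-- Pairwise precision bound for sampled ranking.
Tree patterns `P_1, P_2` have exact scores `S_1 = Σ_r s_1(r)` and
`S_2 = Σ_r s_2(r)` with `S_1 > S_2`, where `0 ≤ s_i(r) ≤ M_r` and
`Σ_r M_r ≤ S_1 + S_2`. Each root `r` is sampled independently with
probability `ρ` (indicator `X r`), and `Ŝ_i(ω) = Σ_r X_r(ω) · s_i(r)`. Then
`Pr[Ŝ_1 < Ŝ_2] ≤ exp(-2 ((S_1 - S_2)/(S_1 + S_2))² ρ²)`. -/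
theorem sampled_ranking_pairwise_precision
    {Ω ι : Type} [MeasurableSpace Ω] [Fintype ι]
    (μ : Measure Ω) [IsProbabilityMeasure μ]
    (ρ : ℝ) (hρ : ρ ∈ Set.Ioc (0 : ℝ) 1)
    (X : ι → Ω → ℝ)
    (hX01 : ∀ r ω, X r ω = 0 ∨ X r ω = 1)
    (hXmeas : ∀ r, Measurable (X r))
    (hindep : iIndepFun X μ)
    (hXprob : ∀ r, μ {ω | X r ω = 1} = ENNReal.ofReal ρ)
    (s₁ s₂ : ι → ℝ) (hs₁ : ∀ r, 0 ≤ s₁ r) (hs₂ : ∀ r, 0 ≤ s₂ r)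
    (M : ι → ℝ) (hM₁ : ∀ r, s₁ r ≤ M r) (hM₂ : ∀ r, s₂ r ≤ M r)
    (hMsum : ∑ r : ι, M r ≤ (∑ r : ι, s₁ r) + ∑ r : ι, s₂ r)
    (hgt : (∑ r : ι, s₂ r) < ∑ r : ι, s₁ r) :
    (μ {ω | ∑ r : ι, X r ω * s₁ r < ∑ r : ι, X r ω * s₂ r}).toReal
      ≤ Real.exp (-2 *
          (((∑ r : ι, s₁ r) - ∑ r : ι, s₂ r) /
           ((∑ r : ι, s₁ r) + ∑ r : ι, s₂ r)) ^ 2 * ρ ^ 2) :=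
  sampled_ranking_pairwise_precision_general μ ρ hρ X hX01 hXmeas hindep hXprob s₁ s₂ hs₁ hs₂ hgt
end
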